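/- Let (E_t)_{t ≥ 0} be a family of linear maps on the n×n complex matrices, each positive (mapping positive semidefinite matrices to positive semidefinite matrices) and trace-preserving. Let ρ̂_0 be a positive definite density matrix and let ρ̄ be a rank-one orthogonal projection (a pure state), and suppose E_t(ρ̂_0) → ρ̄ as t → ∞. Then for every density matrix ρ_0, E_t(ρ_0) → ρ̄ as t → ∞. -/

import Mathlib

/-!
A positive definite `ρ̂₀` dominates a multiple of every density matrix: `c • ρ₀ ≤ c • 1 ≤ ρ̂₀`
for some `c > 0`. Positivity and linearity of `E t` carry this over to `c • E t ρ₀ ≤ E t ρ̂₀`,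
and pairing with the projection `1 - ρ̄` gives
`0 ≤ c Tr((1 - ρ̄) E t ρ₀) ≤ Tr((1 - ρ̄) E t ρ̂₀) → 0`. Finally, a density matrix `A` and a
pure state `P` satisfy `‖A - P‖² ≤ 2 Tr((1 - P) A)` in the Frobenius norm, so `E t ρ₀ → ρ̄`.
-/

open Filter Matrix
open scoped ComplexOrder MatrixOrder

namespace Matrix

variable {𝕜 n : Type*} [RCLike 𝕜] [Fintype n] [DecidableEq n]

lemma PosDef.exists_pos_smul_one_le {A : Matrix n n 𝕜} (hA : A.PosDef) :
    ∃ r : ℝ, 0 < r ∧ r • (1 : Matrix n n 𝕜) ≤ A := by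
  cases isEmpty_or_nonempty n
  · exact ⟨1, one_pos, (Subsingleton.elim _ _ : (1 : ℝ) • (1 : Matrix n n 𝕜) = A).le⟩
  obtain ⟨r, hr, hle⟩ := (CFC.exists_pos_algebraMap_le_iff hA.isHermitian.isSelfAdjoint).2
    fun x hx => by
      obtain ⟨i, rfl⟩ := hA.isHermitian.spectrum_real_eq_range_eigenvalues ▸ hx
      exact hA.eigenvalues_pos i
  exact ⟨r, hr, by rwa [← Algebra.algebraMap_eq_smul_one]⟩

lemma PosSemidef.le_re_trace_smul_one {A : Matrix n n 𝕜} (hA : A.PosSemidef) :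
    A ≤ RCLike.re A.trace • (1 : Matrix n n 𝕜) := by
  rw [← Algebra.algebraMap_eq_smul_one]
  refine le_algebraMap_of_spectrum_le fun x hx => ?_
  obtain ⟨i, rfl⟩ := hA.isHermitian.spectrum_real_eq_range_eigenvalues ▸ hx
  rw [hA.isHermitian.trace_eq_sum_eigenvalues, map_sum]
  simp only [RCLike.ofReal_re]
  exact Finset.single_le_sum (fun j _ => hA.eigenvalues_nonneg j) (Finset.mem_univ i)

lemma PosSemidef.le_one_of_trace_eq_one {A : Matrix n n 𝕜} (hA : A.PosSemidef)
    (htr : A.trace = 1) : A ≤ 1 := by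
  simpa [htr] using hA.le_re_trace_smul_one

lemma trace_mul_nonneg {A B : Matrix n n 𝕜} (hA : 0 ≤ A) (hB : 0 ≤ B) :
    0 ≤ (A * B).trace := by
  rw [← CFC.sqrt_mul_sqrt_self A, Matrix.mul_assoc, trace_mul_comm]
  exact (IsSelfAdjoint.of_nonneg (CFC.sqrt_nonneg A)).conjugate_nonneg hB |>.posSemidef.trace_nonneg

lemma trace_mul_le_trace_mul_of_le {Q X Y : Matrix n n 𝕜} (hQ : 0 ≤ Q) (h : X ≤ Y) :
    (Q * X).trace ≤ (Q * Y).trace := by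
  simpa [Matrix.mul_sub, trace_sub] using trace_mul_nonneg hQ (sub_nonneg.2 h)

section Frobenius

open scoped Matrix.Norms.Frobenius

lemma frobenius_norm_sq_eq_re_trace (A : Matrix n n 𝕜) :
    ‖A‖ ^ 2 = RCLike.re (Aᴴ * A).trace := by
  rw [frobenius_norm_def, ← Real.rpow_natCast, ← Real.rpow_mul (by positivity)]
  norm_num
  simp only [trace, diag_apply, mul_apply, conjTranspose_apply, RCLike.star_def, RCLike.conj_mul,
    map_sum]
  rw [Finset.sum_comm]
  norm_cast

lemma frobenius_norm_sub_sq_le_two_mul_re_trace {A P : Matrix n n 𝕜} (hA : 0 ≤ A)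
    (hAtr : A.trace = 1) (hP : IsStarProjection P) (hPtr : P.trace = 1) :
    ‖A - P‖ ^ 2 ≤ 2 * RCLike.re ((1 - P) * A).trace := by
  have hsq : RCLike.re (A * A).trace ≤ 1 := by
    have h := trace_mul_nonneg hA (sub_nonneg.2 (hA.posSemidef.le_one_of_trace_eq_one hAtr))
    rw [Matrix.mul_sub, Matrix.mul_one, trace_sub, hAtr] at h
    simpa using (RCLike.nonneg_iff.1 h).1
  have hAH : Aᴴ = A := hA.posSemidef.isHermitian
  have hPH : Pᴴ = P := hP.isSelfAdjoint
  have hexp : (A - P)ᴴ * (A - P) = A * A - A * P - P * A + P * P := by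
    rw [conjTranspose_sub, hAH, hPH]
    noncomm_ring
  rw [frobenius_norm_sq_eq_re_trace, hexp, hP.isIdempotentElem.eq, Matrix.sub_mul,
    Matrix.one_mul]
  simp only [trace_add, trace_sub, map_add, map_sub, hAtr, hPtr, trace_mul_comm A P,
    RCLike.one_re]
  linarith

lemma tendsto_of_tendsto_re_trace_one_sub_mul {α : Type*} {l : Filter α}
    {A : α → Matrix n n 𝕜} {P : Matrix n n 𝕜} (hP : IsStarProjection P) (hPtr : P.trace = 1)
    (hA : ∀ᶠ x in l, 0 ≤ A x ∧ (A x).trace = 1)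
    (h : Tendsto (fun x => RCLike.re ((1 - P) * A x).trace) l (nhds 0)) :
    Tendsto A l (nhds P) := by
  have hsq : Tendsto (fun x => ‖A x - P‖ ^ 2) l (nhds 0) :=
    squeeze_zero' (.of_forall fun _ => by positivity)
      (hA.mono fun x hx => frobenius_norm_sub_sq_le_two_mul_re_trace hx.1 hx.2 hP hPtr)
      (by simpa using h.const_mul 2)
  -- the Frobenius norm induces the product topology, so this is convergence in `Matrix n n 𝕜`
  refine tendsto_iff_norm_sub_tendsto_zero.2 ?_
  simpa using hsq.sqrt

end Frobenius

end Matrix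

/-- Corollary on robustness with respect to initialization: if a family of
trace-preserving positive linear maps drives a full-rank (positive definite)
density matrix `ρ̂₀` to a pure target state `ρ̄` (a rank-one orthogonal
projection), then it drives every density matrix to `ρ̄`. -/
theorem pure_target_globally_attractive {n : ℕ}
    (E : ℝ → (Matrix (Fin n) (Fin n) ℂ →ₗ[ℂ] Matrix (Fin n) (Fin n) ℂ))
    (hpos : ∀ t : ℝ, 0 ≤ t → ∀ X : Matrix (Fin n) (Fin n) ℂ,
      X.PosSemidef → (E t X).PosSemidef)
    (htp : ∀ t : ℝ, 0 ≤ t → ∀ X : Matrix (Fin n) (Fin n) ℂ,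
      (E t X).trace = X.trace)
    (ρhat ρbar : Matrix (Fin n) (Fin n) ℂ)
    (hρhat : ρhat.PosDef ∧ ρhat.trace = 1)
    (hρbar : ρbarᴴ = ρbar ∧ ρbar * ρbar = ρbar ∧ ρbar.trace = 1)
    (hlim : Tendsto (fun t => E t ρhat) atTop (nhds ρbar)) :
    ∀ ρ : Matrix (Fin n) (Fin n) ℂ, ρ.PosSemidef → ρ.trace = 1 →
      Tendsto (fun t => E t ρ) atTop (nhds ρbar) := by
  intro ρ hρ hρtr
  have hP : IsStarProjection ρbar := ⟨hρbar.2.1, hρbar.1⟩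
  have hQ : 0 ≤ 1 - ρbar := hP.one_sub.nonneg
  obtain ⟨r, hr, hr_le⟩ := hρhat.1.exists_pos_smul_one_le
  have hdom : r • ρ ≤ ρhat :=
    (smul_le_smul_of_nonneg_left (hρ.le_one_of_trace_eq_one hρtr) hr.le).trans hr_le
  have hE_dom : ∀ t, 0 ≤ t → r • E t ρ ≤ E t ρhat := fun t ht => by
    rw [← LinearMap.map_smul_of_tower, le_iff, ← map_sub]
    exact hpos t ht _ hdom
  have hhat : Tendsto (fun t => Complex.re ((1 - ρbar) * E t ρhat).trace) atTop (nhds 0) := by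
    have hcont : Continuous fun X : Matrix (Fin n) (Fin n) ℂ => Complex.re ((1 - ρbar) * X).trace :=
      Complex.continuous_re.comp (continuous_const.matrix_mul continuous_id).matrix_trace
    simpa [Function.comp_def, Matrix.sub_mul, hρbar.2.1] using (hcont.tendsto ρbar).comp hlim
  have hρ_pair : Tendsto (fun t => Complex.re ((1 - ρbar) * E t ρ).trace) atTop (nhds 0) := by
    refine squeeze_zero' ((eventually_ge_atTop 0).mono fun t ht => ?_)
      ((eventually_ge_atTop 0).mono fun t ht => ?_) (by simpa using hhat.div_const r)
    · exact (RCLike.nonneg_iff.1 (trace_mul_nonneg hQ (hpos t ht ρ hρ).nonneg)).1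
    · rw [le_div_iff₀' hr]
      simpa [trace_smul] using (Complex.le_def.1 (trace_mul_le_trace_mul_of_le hQ (hE_dom t ht))).1
  exact tendsto_of_tendsto_re_trace_one_sub_mul hP hρbar.2.2
    ((eventually_ge_atTop 0).mono fun t ht => ⟨(hpos t ht ρ hρ).nonneg, (htp t ht ρ).trans hρtr⟩)
    hρ_pair
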